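/- For any two density matrices ρ₁, ρ₂, the sub-fidelity is a lower bound for fidelity: tr(ρ₁ρ₂) + √(2[(tr ρ₁ρ₂)² − tr(ρ₁ρ₂ρ₁ρ₂)]) ≤ (tr√(√ρ₁ ρ₂ √ρ₁))². -/

import Mathlib

open Matrix ComplexOrder

attribute [local instance] Classical.propDecidable

/-- Fidelity `F(ρ₁,ρ₂) = (tr √(√ρ₁ ρ₂ √ρ₁))²` (0 when not defined). -/
noncomputable def fid {n : Type*} [Fintype n] [DecidableEq n] (ρ₁ ρ₂ : Matrix n n ℂ) : ℝ :=
  if h1 : ρ₁.PosSemidef then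
    if h2 : (((h1.1.eigenvectorUnitary : Matrix n n ℂ) * diagonal ((RCLike.ofReal : ℝ → ℂ) ∘ Real.sqrt ∘ h1.1.eigenvalues) *
        (star h1.1.eigenvectorUnitary : Matrix n n ℂ)) * ρ₂ *
        ((h1.1.eigenvectorUnitary : Matrix n n ℂ) * diagonal ((RCLike.ofReal : ℝ → ℂ) ∘ Real.sqrt ∘ h1.1.eigenvalues) *
        (star h1.1.eigenvectorUnitary : Matrix n n ℂ))).PosSemidef then
      (((h2.1.eigenvectorUnitary : Matrix n n ℂ) * diagonal ((RCLike.ofReal : ℝ → ℂ) ∘ Real.sqrt ∘ h2.1.eigenvalues) *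
        (star h2.1.eigenvectorUnitary : Matrix n n ℂ)).trace).re ^ 2 else 0
  else 0

/-!
With `S = √ρ₁` and `A = S ρ₂ S ⪰ 0`, cyclicity of the trace gives `tr ρ₁ρ₂ = tr A` and
`tr (ρ₁ρ₂)² = tr A²`, while `F(ρ₁, ρ₂) = (tr √A)²`. In terms of the eigenvalues `μᵢ ≥ 0` of `√A`
the claim becomes `∑ μᵢ² + √(2((∑ μᵢ²)² - ∑ μᵢ⁴)) ≤ (∑ μᵢ)²`, i.e. the polynomial inequality
`2((∑ μᵢ²)² - ∑ μᵢ⁴) ≤ ((∑ μᵢ)² - ∑ μᵢ²)²`, which follows by induction on the number of terms.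
-/

open Finset in
theorem two_mul_sq_sum_sq_sub_sum_pow_four_le {ι : Type*} (s : Finset ι) (μ : ι → ℝ)
    (hμ : ∀ i ∈ s, 0 ≤ μ i) :
    2 * ((∑ i ∈ s, μ i ^ 2) ^ 2 - ∑ i ∈ s, μ i ^ 4) ≤
      ((∑ i ∈ s, μ i) ^ 2 - ∑ i ∈ s, μ i ^ 2) ^ 2 := by
  classical
  induction s using Finset.induction_on with
  | empty => simp
  | insert a s ha ih =>
    have hμs : ∀ i ∈ s, 0 ≤ μ i := fun i hi => hμ i (mem_insert_of_mem hi)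
    have ha0 : 0 ≤ μ a := hμ a (mem_insert_self a s)
    have hsum : 0 ≤ ∑ i ∈ s, μ i := sum_nonneg hμs
    have hsq : ∑ i ∈ s, μ i ^ 2 ≤ (∑ i ∈ s, μ i) ^ 2 := sum_sq_le_sq_sum_of_nonneg hμs
    rw [sum_insert ha, sum_insert ha, sum_insert ha]
    -- adding `a` raises the left side by `4 a² ∑ μᵢ²`, the right side by at least `4 a² (∑ μᵢ)²`
    nlinarith [ih hμs, mul_nonneg (mul_nonneg ha0 hsum) (sub_nonneg.2 hsq),
      mul_nonneg (sq_nonneg (μ a)) (sub_nonneg.2 hsq)]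

theorem sum_sq_add_sqrt_le_sq_sum {ι : Type*} (s : Finset ι) (μ : ι → ℝ)
    (hμ : ∀ i ∈ s, 0 ≤ μ i) :
    ∑ i ∈ s, μ i ^ 2 + √(2 * ((∑ i ∈ s, μ i ^ 2) ^ 2 - ∑ i ∈ s, μ i ^ 4)) ≤
      (∑ i ∈ s, μ i) ^ 2 := by
  have hsq : ∑ i ∈ s, μ i ^ 2 ≤ (∑ i ∈ s, μ i) ^ 2 := Finset.sum_sq_le_sq_sum_of_nonneg hμ
  have hsqrt := Real.sqrt_le_sqrt (two_mul_sq_sum_sq_sub_sum_pow_four_le s μ hμ)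
  rw [Real.sqrt_sq (sub_nonneg.2 hsq)] at hsqrt
  linarith

namespace Matrix

theorem trace_mul_of_mul_self_eq {n R : Type*} [Fintype n] [CommSemiring R] {S P : Matrix n n R}
    (hS : S * S = P) (Q : Matrix n n R) : (P * Q).trace = (S * Q * S).trace := by
  rw [← hS, trace_mul_cycle, trace_mul_comm, Matrix.mul_assoc]

variable {n : Type*} [Fintype n] [DecidableEq n]

theorem trace_mul_mul_mul_of_mul_self_eq {R : Type*} [CommSemiring R] {S P : Matrix n n R}
    (hS : S * S = P) (Q : Matrix n n R) : (P * Q * P * Q).trace = ((S * Q * S) ^ 2).trace := by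
  rw [← hS, sq]
  simp only [← Matrix.mul_assoc]
  conv_rhs => rw [trace_mul_comm]
  simp only [Matrix.mul_assoc]

theorem trace_conjStarAlgAut {R : Type*} [CommRing R] [StarRing R] (U : unitaryGroup n R)
    (X : Matrix n n R) : (Unitary.conjStarAlgAut R _ U X).trace = X.trace := by
  rw [Unitary.conjStarAlgAut_apply, trace_mul_cycle, Unitary.coe_star_mul_self, one_mul]

variable {𝕜 : Type*} [RCLike 𝕜]

namespace IsHermitian

variable {A : Matrix n n 𝕜} (hA : A.IsHermitian)

theorem trace_pow (k : ℕ) : (A ^ k).trace = ∑ i, (hA.eigenvalues i : 𝕜) ^ k := by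
  conv_lhs => rw [hA.spectral_theorem]
  rw [← map_pow, trace_conjStarAlgAut, diagonal_pow, trace_diagonal]
  rfl

theorem trace_cfc (f : ℝ → ℝ) : (hA.cfc f).trace = ∑ i, (f (hA.eigenvalues i) : 𝕜) := by
  rw [IsHermitian.cfc, trace_conjStarAlgAut, trace_diagonal]
  rfl

theorem isHermitian_cfc (f : ℝ → ℝ) : (hA.cfc f).IsHermitian :=
  hA.cfc_eq f ▸ cfc_predicate f A

end IsHermitian

namespace PosSemidef

variable {A : Matrix n n 𝕜} (hA : A.PosSemidef)

theorem cfc_sqrt_mul_self : hA.1.cfc Real.sqrt * hA.1.cfc Real.sqrt = A := by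
  conv_rhs => rw [hA.1.spectral_theorem]
  rw [IsHermitian.cfc, ← map_mul, diagonal_mul_diagonal]
  congr 2
  funext i
  simp [← RCLike.ofReal_mul, Real.mul_self_sqrt (hA.eigenvalues_nonneg i)]

theorem trace_add_sqrt_le_sq_trace_cfc_sqrt :
    RCLike.re A.trace + √(2 * (RCLike.re A.trace ^ 2 - RCLike.re (A ^ 2).trace)) ≤
      RCLike.re (hA.1.cfc Real.sqrt).trace ^ 2 := by
  set μ : n → ℝ := fun i => √(hA.1.eigenvalues i)
  have hμ : ∀ i, μ i ^ 2 = hA.1.eigenvalues i := fun i => Real.sq_sqrt (hA.eigenvalues_nonneg i)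
  have htrace : RCLike.re A.trace = ∑ i, μ i ^ 2 := by
    simp [hA.1.trace_eq_sum_eigenvalues, hμ]
  have htrace_sq : RCLike.re (A ^ 2).trace = ∑ i, μ i ^ 4 := by
    simp [hA.1.trace_pow, ← hμ, ← pow_mul, RCLike.re_ofReal_pow]
  have htrace_sqrt : RCLike.re (hA.1.cfc Real.sqrt).trace = ∑ i, μ i := by
    simp [hA.1.trace_cfc, μ]
  rw [htrace, htrace_sq, htrace_sqrt]
  exact sum_sq_add_sqrt_le_sq_sum _ μ fun i _ => Real.sqrt_nonneg _

end PosSemidef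

end Matrix

theorem fid_eq_sq_trace_sqrt {n : Type*} [Fintype n] [DecidableEq n] {ρ₁ ρ₂ : Matrix n n ℂ}
    (h₁ : ρ₁.PosSemidef) (h : (h₁.1.cfc Real.sqrt * ρ₂ * h₁.1.cfc Real.sqrt).PosSemidef) :
    fid ρ₁ ρ₂ = (h.1.cfc Real.sqrt).trace.re ^ 2 := by
  rw [fid, dif_pos h₁]
  exact dif_pos h

theorem subFidelity_le_fidelity_general {N : ℕ} (ρ₁ ρ₂ : Matrix (Fin N) (Fin N) ℂ)
    (h1 : ρ₁.PosSemidef) (h2 : ρ₂.PosSemidef) :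
    ((ρ₁ * ρ₂).trace).re +
      Real.sqrt (2 * (((ρ₁ * ρ₂).trace).re ^ 2 - ((ρ₁ * ρ₂ * ρ₁ * ρ₂).trace).re))
      ≤ fid ρ₁ ρ₂ := by
  set S := h1.1.cfc Real.sqrt
  have hSS : S * S = ρ₁ := h1.cfc_sqrt_mul_self
  have hM : (S * ρ₂ * S).PosSemidef := by
    have := h2.mul_mul_conjTranspose_same S
    rwa [(h1.1.isHermitian_cfc Real.sqrt).eq] at this
  rw [fid_eq_sq_trace_sqrt h1 hM, trace_mul_of_mul_self_eq hSS,
    trace_mul_mul_mul_of_mul_self_eq hSS]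
  exact hM.trace_add_sqrt_le_sq_trace_cfc_sqrt

theorem subFidelity_le_fidelity {N : ℕ} (ρ₁ ρ₂ : Matrix (Fin N) (Fin N) ℂ)
    (h1 : ρ₁.PosSemidef) (h2 : ρ₂.PosSemidef)
    (t1 : ρ₁.trace = 1) (t2 : ρ₂.trace = 1) :
    ((ρ₁ * ρ₂).trace).re +
      Real.sqrt (2 * (((ρ₁ * ρ₂).trace).re ^ 2 - ((ρ₁ * ρ₂ * ρ₁ * ρ₂).trace).re))
      ≤ fid ρ₁ ρ₂ :=
  subFidelity_le_fidelity_general ρ₁ ρ₂ h1 h2
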